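/- Fix θ ∈ (0,π) and let Q_u = ⋂_{m∈ℤ} H_m ⊂ tildeL with H_m = {(z,α,r) ∈ tildeL : r·cos(α+mθ) ≤ 1 or |α+mθ| ≥ π/2}. Let ∂Q_u denote the frontier of Q_u in tildeL. Then the restriction to ∂Q_u of the projection s : tildeL → tildeG, s(z,α,r) = (z/λ, α, r/λ) with λ = √(r²−|z|²), is a homeomorphism from ∂Q_u onto tildeG = {(z,α,r) ∈ tildeL : r²−|z|² = 1}, and it is equivariant with respect to the ℤ-action m·(z,α,r) = (z·e^{imθ}, α−mθ, r) (which preserves both ∂Q_u and tildeG). -/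

import Mathlib

open Real

/-- `tildeL = {(z,α,r) ∈ ℂ×ℝ×ℝ : 0 < r, |z| < r}` (an open subset of `ℂ×ℝ×ℝ`,
so the frontier within `tildeL` is the ambient frontier intersected with `tildeL`). -/
def tL : Set (ℂ × ℝ × ℝ) := {x | 0 < x.2.2 ∧ ‖x.1‖ < x.2.2}

/-- `tildeG = {(z,α,r) ∈ tildeL : r² − |z|² = 1}`, the universal cover of `SU(1,1)`. -/
def tG : Set (ℂ × ℝ × ℝ) := {x ∈ tL | x.2.2 ^ 2 - ‖x.1‖ ^ 2 = 1}

/-- `λ(z,α,r) = √(r² − |z|²)`. -/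
noncomputable def lamb (x : ℂ × ℝ × ℝ) : ℝ := Real.sqrt (x.2.2 ^ 2 - ‖x.1‖ ^ 2)

/-- The bundle projection `s(z,α,r) = (z/λ, α, r/λ)` with `λ = √(r²−|z|²)`. -/
noncomputable def sproj (x : ℂ × ℝ × ℝ) : ℂ × ℝ × ℝ :=
  ((lamb x)⁻¹ • x.1, x.2.1, (lamb x)⁻¹ * x.2.2)

/-- The `ℤ`-action `m·(z,α,r) = (z·e^{imθ}, α−mθ, r)` (left translation by powers of
the lifted rotation `r_d = (0,−θ,1)`). -/
noncomputable def zact (θ : ℝ) (m : ℤ) (x : ℂ × ℝ × ℝ) : ℂ × ℝ × ℝ :=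
  (x.1 * Complex.exp ((((m : ℝ) * θ : ℝ) : ℂ) * Complex.I), x.2.1 - (m : ℝ) * θ, x.2.2)

/-- `H_m = {(z,α,r) ∈ tildeL : r·cos(α+mθ) ≤ 1 or |α+mθ| ≥ π/2}`. -/
noncomputable def Hhalf (θ : ℝ) (m : ℤ) : Set (ℂ × ℝ × ℝ) :=
  {x ∈ tL | x.2.2 * Real.cos (x.2.1 + (m : ℝ) * θ) ≤ 1 ∨ π / 2 ≤ |x.2.1 + (m : ℝ) * θ|}

/-- The prismatic set `Q_u = ⋂_{m∈ℤ} H_m`. -/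
noncomputable def Qu (θ : ℝ) : Set (ℂ × ℝ × ℝ) := ⋂ m : ℤ, Hhalf θ m

/-!
Because `0 < θ < π`, the coset `α + θℤ` always meets `(-π/2, π/2)`, and among the half-spaces
`H_m` the binding one is that of the coset point closest to `0`. Hence `Q_u = {g ≤ 1}` inside
`tildeL`, for the gauge `g(z, α, r) = r · cos ‖α‖`, where `‖α‖` is the distance from `α` to `θℤ`,
i.e. the norm of `α` in `AddCircle θ`. Both `g` and `λ` are positive on `tildeL` and homogeneous
of degree one for the dilations `(z, α, r) ↦ (c z, α, c r)`, `c > 0`, so `∂Q_u = {g = 1}` and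
`tildeG = {λ = 1}` are two cross-sections of the same family of rays; `s` is the radial projection
onto the second, with inverse the radial projection onto the first. The `ℤ`-action preserves
`|z|`, `r` and `α` modulo `θ`, hence `g` and `λ`.
-/

open Set Filter Topology

lemma isOpen_tL : IsOpen tL :=
  (isOpen_lt (g := fun x : ℂ × ℝ × ℝ => x.2.2) continuous_const (by fun_prop)).inter
    (isOpen_lt (f := fun x : ℂ × ℝ × ℝ => ‖x.1‖) (by fun_prop) (by fun_prop))

noncomputable def dilate (c : ℝ) (x : ℂ × ℝ × ℝ) : ℂ × ℝ × ℝ := (c • x.1, x.2.1, c * x.2.2)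

lemma continuous_dilate : Continuous fun p : ℝ × (ℂ × ℝ × ℝ) => dilate p.1 p.2 := by
  unfold dilate; fun_prop

@[simp] lemma dilate_one (x : ℂ × ℝ × ℝ) : dilate 1 x = x := by
  simp [dilate]

lemma dilate_dilate (c d : ℝ) (x : ℂ × ℝ × ℝ) : dilate c (dilate d x) = dilate (c * d) x := by
  simp only [dilate, smul_smul, mul_assoc]

lemma dilate_mem_tL {c : ℝ} (hc : 0 < c) {x : ℂ × ℝ × ℝ} (hx : x ∈ tL) : dilate c x ∈ tL := by
  refine ⟨mul_pos hc hx.1, ?_⟩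
  simp only [dilate, norm_smul, Real.norm_of_nonneg hc.le]
  exact mul_lt_mul_of_pos_left hx.2 hc

def IsDilateHomogeneous (φ : ℂ × ℝ × ℝ → ℝ) : Prop :=
  ∀ c, 0 < c → ∀ x, φ (dilate c x) = c * φ x

lemma frontier_setOf_le_one {φ : ℂ × ℝ × ℝ → ℝ} (hφ : Continuous φ)
    (hφ_hom : IsDilateHomogeneous φ) : frontier {x | φ x ≤ 1} = {x | φ x = 1} := by
  refine (frontier_le_subset_eq hφ continuous_const).antisymm fun x (hx : φ x = 1) => ?_
  rw [frontier_eq_closure_inter_closure]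
  refine ⟨subset_closure hx.le, ?_⟩
  have hlim : Tendsto (fun c => dilate c x) (𝓝[>] 1) (𝓝 x) := by
    have := (continuous_dilate.comp (continuous_id.prodMk continuous_const)).tendsto' 1 x
      (dilate_one x)
    exact this.mono_left nhdsWithin_le_nhds
  refine mem_closure_of_tendsto hlim ?_
  filter_upwards [self_mem_nhdsWithin] with c (hc : 1 < c)
  simp [hφ_hom c (by linarith) x, hx, hc]

noncomputable def normalizeBy (ψ : ℂ × ℝ × ℝ → ℝ) (x : ℂ × ℝ × ℝ) : ℂ × ℝ × ℝ :=
  dilate (ψ x)⁻¹ x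

section Normalize

variable {φ ψ : ℂ × ℝ × ℝ → ℝ}

lemma normalizeBy_mem {x : ℂ × ℝ × ℝ} (hψ_pos : ∀ x ∈ tL, 0 < ψ x)
    (hψ_hom : IsDilateHomogeneous ψ) (hx : x ∈ tL) :
    normalizeBy ψ x ∈ {y ∈ tL | ψ y = 1} :=
  ⟨dilate_mem_tL (inv_pos.2 (hψ_pos x hx)) hx,
    by rw [normalizeBy, hψ_hom _ (inv_pos.2 (hψ_pos x hx)), inv_mul_cancel₀ (hψ_pos x hx).ne']⟩

lemma normalizeBy_normalizeBy {x : ℂ × ℝ × ℝ} (hψ_pos : ∀ x ∈ tL, 0 < ψ x)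
    (hφ_hom : IsDilateHomogeneous φ) (hx : x ∈ tL) (hφx : φ x = 1) :
    normalizeBy φ (normalizeBy ψ x) = x := by
  have hpos := hψ_pos x hx
  rw [normalizeBy, normalizeBy, hφ_hom _ (inv_pos.2 hpos), hφx, mul_one, inv_inv, dilate_dilate,
    mul_inv_cancel₀ hpos.ne', dilate_one]

lemma continuousOn_normalizeBy (hψ : Continuous ψ) (hψ_pos : ∀ x ∈ tL, 0 < ψ x) :
    ContinuousOn (normalizeBy ψ) tL :=
  continuous_dilate.comp_continuousOn
    ((hψ.continuousOn.inv₀ fun x hx => (hψ_pos x hx).ne').prodMk continuousOn_id)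

noncomputable def levelSetHomeomorph (hφ : Continuous φ) (hψ : Continuous ψ)
    (hφ_pos : ∀ x ∈ tL, 0 < φ x) (hψ_pos : ∀ x ∈ tL, 0 < ψ x) (hφ_hom : IsDilateHomogeneous φ)
    (hψ_hom : IsDilateHomogeneous ψ) : {x ∈ tL | φ x = 1} ≃ₜ {x ∈ tL | ψ x = 1} where
  toFun x := ⟨normalizeBy ψ x, normalizeBy_mem hψ_pos hψ_hom x.2.1⟩
  invFun y := ⟨normalizeBy φ y, normalizeBy_mem hφ_pos hφ_hom y.2.1⟩
  left_inv x := Subtype.ext (normalizeBy_normalizeBy hψ_pos hφ_hom x.2.1 x.2.2)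
  right_inv y := Subtype.ext (normalizeBy_normalizeBy hφ_pos hψ_hom y.2.1 y.2.2)
  continuous_toFun :=
    ((continuousOn_normalizeBy hψ hψ_pos).mono fun _ hx => hx.1).domRestrict.subtype_mk _
  continuous_invFun :=
    ((continuousOn_normalizeBy hφ hφ_pos).mono fun _ hx => hx.1).domRestrict.subtype_mk _

end Normalize

section CosetDistance

variable {θ : ℝ}

lemma norm_coe_le_abs_add_mul (α : ℝ) (m : ℤ) : ‖(α : AddCircle θ)‖ ≤ |α + m * θ| := by
  simpa using QuotientAddGroup.norm_mk_le_norm (S := AddSubgroup.zmultiples θ) (m := α + m * θ)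

lemma exists_abs_add_mul_eq_norm_coe (α : ℝ) : ∃ m : ℤ, |α + m * θ| = ‖(α : AddCircle θ)‖ :=
  ⟨-round (θ⁻¹ * α), by rw [AddCircle.norm_eq]; push_cast; ring_nf⟩

lemma norm_coe_lt_pi_div_two (hθ : 0 < θ) (hθπ : θ < π) (α : ℝ) :
    ‖(α : AddCircle θ)‖ < π / 2 := by
  have := AddCircle.norm_le_half_period θ (x := α) hθ.ne'
  rw [abs_of_pos hθ] at this
  linarith

lemma cos_norm_coe_pos (hθ : 0 < θ) (hθπ : θ < π) (α : ℝ) : 0 < cos ‖(α : AddCircle θ)‖ :=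
  cos_pos_of_mem_Ioo ⟨by linarith [norm_nonneg (α : AddCircle θ), pi_pos],
    norm_coe_lt_pi_div_two hθ hθπ α⟩

lemma forall_mul_cos_le_one_iff (hθ : 0 < θ) (hθπ : θ < π) {r : ℝ} (hr : 0 ≤ r) (α : ℝ) :
    (∀ m : ℤ, r * cos (α + m * θ) ≤ 1 ∨ π / 2 ≤ |α + m * θ|) ↔
      r * cos ‖(α : AddCircle θ)‖ ≤ 1 := by
  have hlt := norm_coe_lt_pi_div_two hθ hθπ α
  constructor
  · intro h
    obtain ⟨m, hm⟩ := exists_abs_add_mul_eq_norm_coe (θ := θ) α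
    rcases h m with h | h
    · rwa [← cos_abs, hm] at h
    · linarith
  · intro h m
    refine or_iff_not_imp_right.2 fun hm => ?_
    have hcos : cos |α + m * θ| ≤ cos ‖(α : AddCircle θ)‖ :=
      cos_le_cos_of_nonneg_of_le_pi (norm_nonneg _) (by linarith [pi_pos])
        (norm_coe_le_abs_add_mul α m)
    rw [← cos_abs]
    exact (mul_le_mul_of_nonneg_left hcos hr).trans h

end CosetDistance

noncomputable def quGauge (θ : ℝ) (x : ℂ × ℝ × ℝ) : ℝ := x.2.2 * cos ‖(x.2.1 : AddCircle θ)‖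

lemma continuous_quGauge (θ : ℝ) : Continuous (quGauge θ) := by
  unfold quGauge
  have : Continuous fun α : ℝ => (α : AddCircle θ) := AddCircle.continuous_mk' θ
  fun_prop

lemma quGauge_pos {θ : ℝ} (hθ : 0 < θ) (hθπ : θ < π) {x : ℂ × ℝ × ℝ} (hx : x ∈ tL) :
    0 < quGauge θ x :=
  mul_pos hx.1 (cos_norm_coe_pos hθ hθπ _)

lemma isDilateHomogeneous_quGauge (θ : ℝ) : IsDilateHomogeneous (quGauge θ) := by
  intro c _ x
  simp only [quGauge, dilate, mul_assoc]

lemma mem_Qu_iff {θ : ℝ} (hθ : 0 < θ) (hθπ : θ < π) {x : ℂ × ℝ × ℝ} :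
    x ∈ Qu θ ↔ x ∈ tL ∧ quGauge θ x ≤ 1 := by
  simp only [Qu, Hhalf, mem_iInter, mem_sep_iff, forall_and, forall_const]
  exact and_congr_right fun hx => forall_mul_cos_le_one_iff hθ hθπ hx.1.le _

lemma frontier_Qu_inter_tL {θ : ℝ} (hθ : 0 < θ) (hθπ : θ < π) :
    frontier (Qu θ) ∩ tL = {x ∈ tL | quGauge θ x = 1} := by
  have hQ : Qu θ = {x | quGauge θ x ≤ 1} ∩ tL := by
    ext x; rw [mem_Qu_iff hθ hθπ, and_comm]; rfl
  rw [hQ, frontier_inter_open_inter isOpen_tL,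
    frontier_setOf_le_one (continuous_quGauge θ) (isDilateHomogeneous_quGauge θ), inter_comm]
  rfl

lemma continuous_lamb : Continuous lamb := by
  unfold lamb; fun_prop

lemma lamb_pos {x : ℂ × ℝ × ℝ} (hx : x ∈ tL) : 0 < lamb x :=
  sqrt_pos.2 (sub_pos.2 (pow_lt_pow_left₀ hx.2 (norm_nonneg _) two_ne_zero))

lemma isDilateHomogeneous_lamb : IsDilateHomogeneous lamb := by
  intro c hc x
  rw [lamb, lamb, dilate, norm_smul, norm_of_nonneg hc.le,
    show (c * x.2.2) ^ 2 - (c * ‖x.1‖) ^ 2 = c ^ 2 * (x.2.2 ^ 2 - ‖x.1‖ ^ 2) by ring,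
    sqrt_mul (sq_nonneg c), sqrt_sq hc.le]

lemma tG_eq : tG = {x ∈ tL | lamb x = 1} := by
  ext x; simp only [tG, lamb, mem_sep_iff, sqrt_eq_one]

section Action

variable (θ : ℝ) (m : ℤ) (x : ℂ × ℝ × ℝ)

lemma norm_zact_fst : ‖(zact θ m x).1‖ = ‖x.1‖ := by
  simp only [zact, norm_mul, Complex.norm_exp_ofReal_mul_I, mul_one]

lemma coe_zact_snd_fst : ((zact θ m x).2.1 : AddCircle θ) = x.2.1 := by
  simp [zact, AddCircle.coe_period]

variable {x}

lemma zact_mem_tL (hx : x ∈ tL) : zact θ m x ∈ tL :=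
  ⟨hx.1, (norm_zact_fst θ m x).trans_lt hx.2⟩

lemma zact_mem_tG (hx : x ∈ tG) : zact θ m x ∈ tG :=
  ⟨zact_mem_tL θ m hx.1, by rw [norm_zact_fst]; exact hx.2⟩

variable (x)

lemma quGauge_zact : quGauge θ (zact θ m x) = quGauge θ x := by
  rw [quGauge, coe_zact_snd_fst]; rfl

lemma lamb_zact : lamb (zact θ m x) = lamb x := by
  rw [lamb, norm_zact_fst]; rfl

lemma sproj_zact : sproj (zact θ m x) = zact θ m (sproj x) := by
  rw [sproj, lamb_zact]
  simp only [sproj, zact, smul_mul_assoc]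

end Action

theorem stmt18 (θ : ℝ) (hθ : 0 < θ) (hθπ : θ < π) :
    (∀ m : ℤ, ∀ x ∈ frontier (Qu θ) ∩ tL, zact θ m x ∈ frontier (Qu θ) ∩ tL) ∧
    (∀ m : ℤ, ∀ x ∈ tG, zact θ m x ∈ tG) ∧
    (∀ m : ℤ, ∀ x ∈ frontier (Qu θ) ∩ tL, sproj (zact θ m x) = zact θ m (sproj x)) ∧
    ∃ h : ↥(frontier (Qu θ) ∩ tL) ≃ₜ ↥tG,
      ∀ x : ↥(frontier (Qu θ) ∩ tL), (h x : ℂ × ℝ × ℝ) = sproj (x : ℂ × ℝ × ℝ) := by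
  rw [frontier_Qu_inter_tL hθ hθπ]
  refine ⟨fun m x hx => ⟨zact_mem_tL θ m hx.1, (quGauge_zact θ m x).trans hx.2⟩,
    fun m x hx => zact_mem_tG θ m hx, fun m x _ => sproj_zact θ m x, ?_⟩
  rw [tG_eq]
  exact ⟨levelSetHomeomorph (continuous_quGauge θ) continuous_lamb (fun _ => quGauge_pos hθ hθπ)
    (fun _ => lamb_pos) (isDilateHomogeneous_quGauge θ) isDilateHomogeneous_lamb, fun _ => rfl⟩
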